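/- arXiv:2406.17581 — 5 statements merged into one kernel-verified Lean document; each statement's English description precedes it below -/
import Mathlib

section
/- Let M be a symplectic matrix on a symplectic vector space decomposed as S ⊕ F ⊕ C ⊕ P (where F ⊕ C is a Lagrangian of the subject system with complementary Lagrangian P, and S has symplectic form Ω_S). If the block M_{FP} : P → F of M vanishes, then the block M_{FS} : S → F satisfies M_{FS} Ω_S M_{FS}^T = 0. -/
open Matrix

/-- The standard symplectic form matrix `[[0, 1], [-1, 0]]` on `(ι ⊕ ι) → K`. -/
def stdJ (K : Type*) [Field K] (ι : Type*) [Fintype ι] [DecidableEq ι] :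
    Matrix (ι ⊕ ι) (ι ⊕ ι) K :=
  Matrix.fromBlocks 0 1 (-1) 0

lemma negOne_blocks {K : Type*} [Field K] {α β : Type*} [DecidableEq α] [DecidableEq β] :
    (Matrix.fromBlocks (-1) 0 0 (-1) : Matrix (α ⊕ β) (α ⊕ β) K) = -1 := by
  ext i j
  rcases i with i | i <;> rcases j with j | j <;>
    simp [Matrix.one_apply]

lemma stdJ_sq (K : Type*) [Field K] (ι : Type*) [Fintype ι] [DecidableEq ι] :
    stdJ K ι * stdJ K ι = -1 := by
  simp [stdJ, Matrix.fromBlocks_multiply, negOne_blocks]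

/-- If `M` is a symplectic matrix on `S ⊕ F ⊕ C ⊕ P` (where `Q = F ⊕ C` is a
Lagrangian of the subject with complementary Lagrangian `P`, and `S` carries the
standard symplectic form) and the block `M_{FP}` vanishes, then the block `M_{FS}`
satisfies `M_{FS} Ω_S M_{FS}ᵀ = 0`, i.e. it is a Poisson variable. -/
theorem measured_variable_is_poisson {K : Type*} [Field K]
    {ιs ιF ιC : Type*} [Fintype ιs] [DecidableEq ιs] [Fintype ιF] [DecidableEq ιF]
    [Fintype ιC] [DecidableEq ιC]
    (M : Matrix ((ιs ⊕ ιs) ⊕ ((ιF ⊕ ιC) ⊕ (ιF ⊕ ιC)))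
                ((ιs ⊕ ιs) ⊕ ((ιF ⊕ ιC) ⊕ (ιF ⊕ ιC))) K)
    (hsymp : Mᵀ * Matrix.fromBlocks (stdJ K ιs) 0 0 (stdJ K (ιF ⊕ ιC)) * M =
        Matrix.fromBlocks (stdJ K ιs) 0 0 (stdJ K (ιF ⊕ ιC)))
    (hMFP : (Matrix.of fun (i : ιF) (j : ιF ⊕ ιC) =>
        M (Sum.inr (Sum.inl (Sum.inl i))) (Sum.inr (Sum.inr j))) = 0) :
    (Matrix.of fun (i : ιF) (j : ιs ⊕ ιs) =>
        M (Sum.inr (Sum.inl (Sum.inl i))) (Sum.inl j)) * stdJ K ιs *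
      (Matrix.of fun (i : ιF) (j : ιs ⊕ ιs) =>
        M (Sum.inr (Sum.inl (Sum.inl i))) (Sum.inl j))ᵀ = 0 := by
  set J : Matrix ((ιs ⊕ ιs) ⊕ ((ιF ⊕ ιC) ⊕ (ιF ⊕ ιC)))
      ((ιs ⊕ ιs) ⊕ ((ιF ⊕ ιC) ⊕ (ιF ⊕ ιC))) K :=
    Matrix.fromBlocks (stdJ K ιs) 0 0 (stdJ K (ιF ⊕ ιC)) with hJ
  have hJ2 : J * J = -1 := by
    simp [hJ, Matrix.fromBlocks_multiply, stdJ_sq, negOne_blocks]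
  have hNM : (-(J * Mᵀ * J)) * M = 1 := by
    have : J * (Mᵀ * J * M) = J * J := by rw [hsymp]
    calc (-(J * Mᵀ * J)) * M = -(J * (Mᵀ * J * M)) := by noncomm_ring
    _ = -(J * J) := by rw [this]
    _ = 1 := by rw [hJ2]; simp
  have hMN : M * (-(J * Mᵀ * J)) = 1 := mul_eq_one_comm.mp hNM
  have hMJMt : M * J * Mᵀ = J := by
    have h1 : M * J * Mᵀ * J = -1 := by
      calc M * J * Mᵀ * J = -(M * (-(J * Mᵀ * J))) := by noncomm_ring
      _ = -1 := by rw [hMN]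
    have h2 : M * J * Mᵀ * J * J = -1 * J := by rw [h1]
    rw [Matrix.mul_assoc (M * J * Mᵀ), hJ2] at h2
    simpa using h2
  have hent : ∀ (i j : ιF),
      (M * J * Mᵀ) (Sum.inr (Sum.inl (Sum.inl i))) (Sum.inr (Sum.inl (Sum.inl j))) = 0 := by
    intro i j
    rw [hMJMt]
    simp [hJ, stdJ, Matrix.fromBlocks]
  have hFP : ∀ (i : ιF) (j : ιF ⊕ ιC),
      M (Sum.inr (Sum.inl (Sum.inl i))) (Sum.inr (Sum.inr j)) = 0 := by
    intro i j
    have := congrFun (congrFun hMFP i) j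
    simpa using this
  ext i j
  have h := hent i j
  simp only [Matrix.mul_apply, Matrix.transpose_apply, Matrix.of_apply,
    Fintype.sum_sum_type, hJ, stdJ, Matrix.fromBlocks_apply₁₁,
    Matrix.fromBlocks_apply₁₂, Matrix.fromBlocks_apply₂₁, Matrix.fromBlocks_apply₂₂,
    Matrix.zero_apply, Matrix.one_apply, Matrix.neg_apply, hFP,
    mul_zero, zero_mul, Finset.sum_const_zero, add_zero, zero_add] at h ⊢
  convert h using 2
end

section
/- Let M be a symplectic matrix on S ⊕ Q ⊕ P (Q Lagrangian in A = Q ⊕ P) with M_{FP} = 0 where F is the orthogonal complement in Q of the image of M_{QP}, and suppose a variable Z : S → Z' is fixed by M, i.e. there is a function g : Q → Z' with Z(s) = g(Q-component of M(s + p)) for all s ∈ S, p ∈ P. Then there exists a function f : F → Z' such that Z(s) = f(M_{FS} s) for all s ∈ S. -/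
open Matrix

/-- If a variable `Z` of the object `S` is fixed by a measurement `M` on
`S ⊕ (F ⊕ C) ⊕ P` (with `M` symplectic, `M_{FP} = 0`, and `M_{CP}` surjective),
then `Z` factors through the measured variable `M_{FS}`. -/
theorem fixed_variable_factors_through_measured {K : Type*} [Field K]
    {ιs ιF ιC : Type*} [Fintype ιs] [DecidableEq ιs] [Fintype ιF] [DecidableEq ιF]
    [Fintype ιC] [DecidableEq ιC] {W : Type*}
    (M : Matrix ((ιs ⊕ ιs) ⊕ ((ιF ⊕ ιC) ⊕ (ιF ⊕ ιC)))
                ((ιs ⊕ ιs) ⊕ ((ιF ⊕ ιC) ⊕ (ιF ⊕ ιC))) K)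
    (hsymp : Mᵀ * Matrix.fromBlocks (stdJ K ιs) 0 0 (stdJ K (ιF ⊕ ιC)) * M =
        Matrix.fromBlocks (stdJ K ιs) 0 0 (stdJ K (ιF ⊕ ιC)))
    (hMFP : (Matrix.of fun (i : ιF) (j : ιF ⊕ ιC) =>
        M (Sum.inr (Sum.inl (Sum.inl i))) (Sum.inr (Sum.inr j))) = 0)
    (hMCP : Function.Surjective fun (p : (ιF ⊕ ιC) → K) =>
        (Matrix.of fun (i : ιC) (j : ιF ⊕ ιC) =>
          M (Sum.inr (Sum.inl (Sum.inr i))) (Sum.inr (Sum.inr j))).mulVec p)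
    (Z : ((ιs ⊕ ιs) → K) → W)
    (g : ((ιF ⊕ ιC) → K) → W)
    (hfix : ∀ (s : (ιs ⊕ ιs) → K) (p : (ιF ⊕ ιC) → K),
        Z s = g (fun q => M.mulVec (Sum.elim s (Sum.elim 0 p)) (Sum.inr (Sum.inl q)))) :
    ∃ f : (ιF → K) → W, ∀ s : (ιs ⊕ ιs) → K,
      Z s = f ((Matrix.of fun (i : ιF) (j : ιs ⊕ ιs) =>
        M (Sum.inr (Sum.inl (Sum.inl i))) (Sum.inl j)).mulVec s) := by
  refine ⟨fun x => g (Sum.elim x 0), fun s => ?_⟩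
  obtain ⟨p, hp⟩ := hMCP
    (fun i => -(∑ j, M (Sum.inr (Sum.inl (Sum.inr i))) (Sum.inl j) * s j))
  rw [hfix s p]
  congr 1
  funext q
  have hps : ∀ i : ιC,
      ∑ j, M (Sum.inr (Sum.inl (Sum.inr i))) (Sum.inr (Sum.inr j)) * p j
        = -(∑ j, M (Sum.inr (Sum.inl (Sum.inr i))) (Sum.inl j) * s j) := by
    intro i
    have := congrFun hp i
    simpa [Matrix.mulVec, dotProduct] using this
  cases q with
  | inl i =>
    have hz : ∀ j : ιF ⊕ ιC,
        M (Sum.inr (Sum.inl (Sum.inl i))) (Sum.inr (Sum.inr j)) = 0 := by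
      intro j
      have := congrFun (congrFun hMFP i) j
      simpa using this
    simp [Matrix.mulVec, dotProduct, Fintype.sum_sum_type, hz]
  | inr i =>
    simp [Matrix.mulVec, dotProduct, Fintype.sum_sum_type, hps i]
end

section
/- A linear variable Z : S → Z' on a symplectic vector space S is measurable in nomic toy theory if and only if Z Ω_S Z^T = 0. That is, there exists a symplectic matrix M on S ⊕ Q ⊕ P (Q = Z' Lagrangian, P complementary) with M_{QP} = 0 and M_{QS} = Z if and only if Z is a Poisson variable. -/
open Matrix

/-!
If `M` is symplectic, so is `Mᵀ`, i.e. `M Ω Mᵀ = Ω`. The `Q`-rows of `M` are `(Z, M_QQ, 0)`, and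
since `Q` is isotropic in `A`, the `QQ` block of `M Ω Mᵀ` is `Z Ω_S Zᵀ`; it must equal the `QQ`
block of `Ω`, which is `0`.

Conversely, let `N` send `S` to `Q` by `Z` and `P` to `S` by `Ω_S Zᵀ`. Then `Ω N` is symmetric and
`N² = 0` exactly because `Z Ω_S Zᵀ = 0`, so the shear `1 + N` is symplectic, and it measures `Z`.
-/

namespace Matrix

variable {R : Type*} [CommRing R] {n : Type*} [Fintype n]

theorem mul_mul_transpose_eq_of_transpose_mul_mul_eq [DecidableEq n] {J M : Matrix n n R}
    (hJ : J * J = -1) (hM : Mᵀ * J * M = J) : M * J * Mᵀ = J := by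
  have hleft : (-J * Mᵀ * J) * M = 1 := by
    rw [show -J * Mᵀ * J * M = -J * (Mᵀ * J * M) by noncomm_ring, hM, neg_mul, hJ, neg_neg]
  have hright : M * (-J * Mᵀ * J) = 1 := mul_eq_one_comm.mp hleft
  calc M * J * Mᵀ = M * (-J * Mᵀ * J) * J := by
        rw [show M * (-J * Mᵀ * J) * J = -(M * J * Mᵀ * (J * J)) by noncomm_ring, hJ]
        noncomm_ring
    _ = J := by rw [hright, one_mul]

theorem one_add_transpose_mul_mul_one_add [DecidableEq n] {J N : Matrix n n R} (hJ : Jᵀ = -J)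
    (hN : (J * N)ᵀ = J * N) (hN2 : N * N = 0) : (1 + N)ᵀ * J * (1 + N) = J := by
  have hNJ : Nᵀ * J = -(J * N) := by
    rw [← hN, transpose_mul, hJ, mul_neg, neg_neg]
  calc (1 + N)ᵀ * J * (1 + N) = J + J * N + Nᵀ * J + Nᵀ * J * N := by
        rw [transpose_add, transpose_one]; noncomm_ring
    _ = J := by rw [hNJ, neg_mul, mul_assoc, hN2]; noncomm_ring

theorem submatrix_mul_mul_transpose {m : Type*} (M J : Matrix n n R) (e : m → n) :
    (M * J * Mᵀ).submatrix e e = M.submatrix e id * J * (M.submatrix e id)ᵀ := by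
  rw [submatrix_mul _ _ _ _ _ Function.bijective_id, submatrix_mul _ _ _ _ _ Function.bijective_id,
    transpose_submatrix, submatrix_id_id]

theorem fromCols_mul_fromBlocks_diagonal_mul_transpose {m n₁ n₂ : Type*} [Fintype n₁]
    [Fintype n₂] (X : Matrix m n₁ R) (Y : Matrix m n₂ R) (A : Matrix n₁ n₁ R)
    (D : Matrix n₂ n₂ R) :
    fromCols X Y * fromBlocks A 0 0 D * (fromCols X Y)ᵀ = X * A * Xᵀ + Y * D * Yᵀ := by
  simp [fromCols_mul_fromBlocks, transpose_fromCols, fromCols_mul_fromRows]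

end Matrix

section stdJ

variable {K : Type*} [Field K] {ι m : Type*} [Fintype ι] [DecidableEq ι]

theorem stdJ_mul_self : stdJ K ι * stdJ K ι = -1 := by
  simp [stdJ, fromBlocks_multiply, ← fromBlocks_one, fromBlocks_neg]

theorem stdJ_mul_stdJ_mul (A : Matrix (ι ⊕ ι) m K) : stdJ K ι * (stdJ K ι * A) = -A := by
  rw [← Matrix.mul_assoc, stdJ_mul_self, Matrix.neg_mul, Matrix.one_mul]

theorem stdJ_transpose : (stdJ K ι)ᵀ = -stdJ K ι := by
  simp [stdJ, fromBlocks_transpose, fromBlocks_neg]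

theorem stdJ_mul_fromRows (X Y : Matrix ι m K) : stdJ K ι * fromRows X Y = fromRows Y (-X) := by
  simp [stdJ, fromBlocks_mul_fromRows]

theorem fromCols_mul_stdJ (X Y : Matrix m ι K) : fromCols X Y * stdJ K ι = fromCols (-Y) X := by
  simp [stdJ, fromCols_mul_fromBlocks]

theorem fromCols_zero_mul_stdJ_mul_transpose (Y : Matrix m ι K) :
    fromCols Y (0 : Matrix m ι K) * stdJ K ι * (fromCols Y (0 : Matrix m ι K))ᵀ = 0 := by
  simp [fromCols_mul_stdJ, transpose_fromCols, fromCols_mul_fromRows]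

end stdJ

section Measurement

variable {K : Type*} [Field K] {ιs ιQ : Type*} [Fintype ιs] [DecidableEq ιs] [Fintype ιQ]
  [DecidableEq ιQ]

theorem fromBlocks_stdJ_mul_self :
    fromBlocks (stdJ K ιs) 0 0 (stdJ K ιQ) * fromBlocks (stdJ K ιs) 0 0 (stdJ K ιQ) = -1 := by
  simp [fromBlocks_multiply, stdJ_mul_self, ← fromBlocks_one, fromBlocks_neg]

theorem fromBlocks_stdJ_transpose :
    (fromBlocks (stdJ K ιs) 0 0 (stdJ K ιQ))ᵀ = -fromBlocks (stdJ K ιs) 0 0 (stdJ K ιQ) := by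
  simp [fromBlocks_transpose, stdJ_transpose, fromBlocks_neg]

theorem mul_stdJ_mul_transpose_eq_zero_of_symplectic (Z : Matrix ιQ (ιs ⊕ ιs) K)
    (M : Matrix ((ιs ⊕ ιs) ⊕ (ιQ ⊕ ιQ)) ((ιs ⊕ ιs) ⊕ (ιQ ⊕ ιQ)) K)
    (hM : Mᵀ * fromBlocks (stdJ K ιs) 0 0 (stdJ K ιQ) * M =
      fromBlocks (stdJ K ιs) 0 0 (stdJ K ιQ))
    (hQP : (of fun i j => M (.inr (.inl i)) (.inr (.inr j))) = 0)
    (hQS : (of fun i j => M (.inr (.inl i)) (.inl j)) = Z) :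
    Z * stdJ K ιs * Zᵀ = 0 := by
  set q : ιQ → (ιs ⊕ ιs) ⊕ (ιQ ⊕ ιQ) := fun i => .inr (.inl i)
  have hrow : M.submatrix q id = fromCols Z (fromCols (M.submatrix q (.inr ∘ .inl)) 0) := by
    ext i ((j | j) | j | j)
    · exact congrFun₂ hQS i (.inl j)
    · exact congrFun₂ hQS i (.inr j)
    · rfl
    · exact congrFun₂ hQP i j
  have hQQ := congrArg (submatrix · q q)
    (mul_mul_transpose_eq_of_transpose_mul_mul_eq fromBlocks_stdJ_mul_self hM)
  simp only [submatrix_mul_mul_transpose, hrow, fromCols_mul_fromBlocks_diagonal_mul_transpose,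
    fromCols_zero_mul_stdJ_mul_transpose, add_zero] at hQQ
  rw [hQQ]
  ext i j
  simp [q, stdJ]

def measurementGenerator (Z : Matrix ιQ (ιs ⊕ ιs) K) :
    Matrix ((ιs ⊕ ιs) ⊕ (ιQ ⊕ ιQ)) ((ιs ⊕ ιs) ⊕ (ιQ ⊕ ιQ)) K :=
  fromBlocks 0 (fromCols 0 (stdJ K ιs * Zᵀ)) (fromRows Z 0) 0

theorem transpose_fromBlocks_stdJ_mul_measurementGenerator (Z : Matrix ιQ (ιs ⊕ ιs) K) :
    (fromBlocks (stdJ K ιs) 0 0 (stdJ K ιQ) * measurementGenerator Z)ᵀ =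
      fromBlocks (stdJ K ιs) 0 0 (stdJ K ιQ) * measurementGenerator Z := by
  simp [measurementGenerator, fromBlocks_multiply, stdJ_mul_stdJ_mul, stdJ_mul_fromRows,
    fromBlocks_transpose, transpose_fromCols, transpose_fromRows]

theorem measurementGenerator_mul_self {Z : Matrix ιQ (ιs ⊕ ιs) K}
    (hZ : Z * stdJ K ιs * Zᵀ = 0) :
    measurementGenerator Z * measurementGenerator Z = 0 := by
  have hZ' : Z * (stdJ K ιs * Zᵀ) = 0 := by rw [← Matrix.mul_assoc, hZ]
  simp [measurementGenerator, fromBlocks_multiply, fromCols_mul_fromRows, hZ']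

end Measurement

/-- Main theorem of nomic toy theory: a linear variable `Z : S → Q` is measurable
(there is a symplectic matrix `M` on `S ⊕ Q ⊕ P` with `M_{QP} = 0` and
`M_{QS} = Z`) if and only if `Z` is a Poisson variable (`Z Ω_S Zᵀ = 0`). -/
theorem measurable_iff_poisson {K : Type*} [Field K]
    {ιs ιQ : Type*} [Fintype ιs] [DecidableEq ιs] [Fintype ιQ] [DecidableEq ιQ]
    (Z : Matrix ιQ (ιs ⊕ ιs) K) :
    (∃ M : Matrix ((ιs ⊕ ιs) ⊕ (ιQ ⊕ ιQ)) ((ιs ⊕ ιs) ⊕ (ιQ ⊕ ιQ)) K,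
        Mᵀ * Matrix.fromBlocks (stdJ K ιs) 0 0 (stdJ K ιQ) * M =
          Matrix.fromBlocks (stdJ K ιs) 0 0 (stdJ K ιQ) ∧
        (Matrix.of fun (i : ιQ) (j : ιQ) =>
          M (Sum.inr (Sum.inl i)) (Sum.inr (Sum.inr j))) = 0 ∧
        (Matrix.of fun (i : ιQ) (j : ιs ⊕ ιs) =>
          M (Sum.inr (Sum.inl i)) (Sum.inl j)) = Z)
      ↔ Z * stdJ K ιs * Zᵀ = 0 := by
  constructor
  · rintro ⟨M, hM, hQP, hQS⟩
    exact mul_stdJ_mul_transpose_eq_zero_of_symplectic Z M hM hQP hQS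
  · intro hZ
    refine ⟨1 + measurementGenerator Z,
      one_add_transpose_mul_mul_one_add fromBlocks_stdJ_transpose
        (transpose_fromBlocks_stdJ_mul_measurementGenerator Z) (measurementGenerator_mul_self hZ),
      ?_, ?_⟩ <;>
    · ext i j
      simp [measurementGenerator]
end

section
/- Let V = V₁ ⊕ V₂ (orthogonal direct sum) with projection V₁-proj : V → V₁, and let (U, a) be an epistemic state of V (U isotropic). Then the image of the support U^⊥ + a under the projection onto V₁ equals the support of the epistemic state (U ∩ V₁, proj₁(a)) of V₁; i.e. proj₁(U^⊥) + proj₁(a) = (U ∩ V₁)^{⊥₁} + proj₁(a), where ⊥₁ denotes orthogonal complement within V₁. -/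
open Matrix

lemma dot_sum_elim {K : Type*} [Field K] {γ δ : Type*} [Fintype γ] [Fintype δ]
    (u : (γ ⊕ δ) → K) (x : γ → K) (y : δ → K) :
    u ⬝ᵥ Sum.elim x y = (u ∘ Sum.inl) ⬝ᵥ x + (u ∘ Sum.inr) ⬝ᵥ y := by
  simp [dotProduct, Fintype.sum_sum_type, Function.comp]

/-- Marginals of epistemic states: for an epistemic state `(U, a)` of the composite
`V₁ ⊕ V₂`, the projection onto `V₁` of its support equals the support of the
epistemic state `(U ∩ V₁, proj₁ a)` of `V₁`. -/
theorem marginal_of_epistemic_state {K : Type*} [Field K]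
    {α β : Type*} [Fintype α] [DecidableEq α] [Fintype β] [DecidableEq β]
    (U : Submodule K (((α ⊕ α) ⊕ (β ⊕ β)) → K))
    (hU : ∀ x ∈ U, ∀ y ∈ U,
      x ⬝ᵥ (Matrix.fromBlocks (stdJ K α) 0 0 (stdJ K β)).mulVec y = 0)
    (a : ((α ⊕ α) ⊕ (β ⊕ β)) → K) :
    (fun (x : ((α ⊕ α) ⊕ (β ⊕ β)) → K) => x ∘ Sum.inl) ''
        {w | ∀ u ∈ U, u ⬝ᵥ w = u ⬝ᵥ a} =
      {w₁ : (α ⊕ α) → K | ∀ u₁ : (α ⊕ α) → K,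
        Sum.elim u₁ 0 ∈ U → u₁ ⬝ᵥ w₁ = u₁ ⬝ᵥ (a ∘ Sum.inl)} := by
  ext w₁
  constructor
  · rintro ⟨w, hw, rfl⟩ u₁ hu₁
    have := hw _ hu₁
    have h1 : Sum.elim u₁ (0 : (β ⊕ β) → K) ⬝ᵥ w
        = u₁ ⬝ᵥ (w ∘ Sum.inl) := by
      simp [dotProduct, Fintype.sum_sum_type]
    have h2 : Sum.elim u₁ (0 : (β ⊕ β) → K) ⬝ᵥ a
        = u₁ ⬝ᵥ (a ∘ Sum.inl) := by
      simp [dotProduct, Fintype.sum_sum_type]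
    rw [h1, h2] at this
    exact this
  · intro hw₁
    let π₂ : U →ₗ[K] ((β ⊕ β) → K) :=
      { toFun := fun u => (u : ((α ⊕ α) ⊕ (β ⊕ β)) → K) ∘ Sum.inr
        map_add' := fun u v => rfl
        map_smul' := fun c u => rfl }
    let f : (((α ⊕ α) ⊕ (β ⊕ β)) → K) →ₗ[K] K :=
      { toFun := fun x => x ⬝ᵥ a - (x ∘ Sum.inl) ⬝ᵥ w₁
        map_add' := fun x y => by
          have h : (x + y) ∘ Sum.inl = x ∘ Sum.inl + y ∘ Sum.inl := rfl
          simp only [add_dotProduct, h]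
          ring
        map_smul' := fun c x => by
          have h : (c • x) ∘ Sum.inl = c • (x ∘ Sum.inl) := rfl
          simp only [smul_dotProduct, h, smul_eq_mul, RingHom.id_apply]
          ring }
    let ψ : U →ₗ[K] K := f.comp U.subtype
    have hker : LinearMap.ker π₂ ≤ LinearMap.ker ψ := by
      intro u hu
      have h2 : (u : ((α ⊕ α) ⊕ (β ⊕ β)) → K) ∘ Sum.inr = 0 := hu
      have hdecomp : (u : ((α ⊕ α) ⊕ (β ⊕ β)) → K)
          = Sum.elim ((u : ((α ⊕ α) ⊕ (β ⊕ β)) → K) ∘ Sum.inl)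
              ((u : ((α ⊕ α) ⊕ (β ⊕ β)) → K) ∘ Sum.inr) := by
        funext i; cases i <;> rfl
      have hmem : Sum.elim ((u : ((α ⊕ α) ⊕ (β ⊕ β)) → K) ∘ Sum.inl)
          (0 : (β ⊕ β) → K) ∈ U := by
        rw [← h2, ← hdecomp]; exact u.2
      have hthis := hw₁ _ hmem
      simp only [LinearMap.mem_ker, ψ, f, LinearMap.coe_comp, Function.comp_apply,
        Submodule.coe_subtype, LinearMap.coe_mk, AddHom.coe_mk]
      have ha : (u : ((α ⊕ α) ⊕ (β ⊕ β)) → K) ⬝ᵥ a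
          = ((u : ((α ⊕ α) ⊕ (β ⊕ β)) → K) ∘ Sum.inl) ⬝ᵥ (a ∘ Sum.inl) := by
        conv_lhs => rw [hdecomp, h2]
        simp [dotProduct, Fintype.sum_sum_type]
      rw [ha, hthis]
      ring
    let ψ' : (U ⧸ LinearMap.ker π₂) →ₗ[K] K := (LinearMap.ker π₂).liftQ ψ hker
    let e : (U ⧸ LinearMap.ker π₂) ≃ₗ[K] LinearMap.range π₂ := π₂.quotKerEquivRange
    let g : LinearMap.range π₂ →ₗ[K] K := ψ'.comp (e.symm : _ →ₗ[K] _)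
    obtain ⟨h, hh⟩ := g.exists_extend
    have hg : ∀ u : U, h ((u : ((α ⊕ α) ⊕ (β ⊕ β)) → K) ∘ Sum.inr) = ψ u := by
      intro u
      have hmem : (u : ((α ⊕ α) ⊕ (β ⊕ β)) → K) ∘ Sum.inr ∈ LinearMap.range π₂ :=
        ⟨u, rfl⟩
      have h0 : h ((u : ((α ⊕ α) ⊕ (β ⊕ β)) → K) ∘ Sum.inr) = g ⟨_, hmem⟩ := by
        have := congrArg (fun f => f ⟨_, hmem⟩) hh
        simpa using this
      rw [h0]
      show ψ' (e.symm ⟨_, hmem⟩) = ψ u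
      have he : e ((LinearMap.ker π₂).mkQ u) = ⟨_, hmem⟩ := by
        apply Subtype.ext
        rfl
      rw [← he, LinearEquiv.symm_apply_apply]
      rfl
    let w₂ : (β ⊕ β) → K := fun i => h (Pi.single i 1)
    have hdot : ∀ v : (β ⊕ β) → K, h v = v ⬝ᵥ w₂ := by
      intro v
      rw [LinearMap.pi_apply_eq_sum_univ h v]
      have hs : ∀ i : β ⊕ β, (fun j => if i = j then (1 : K) else 0)
          = Pi.single i 1 := by
        intro i; funext j; simp [Pi.single_apply, eq_comm]
      simp only [hs, dotProduct, smul_eq_mul, w₂]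
    refine ⟨Sum.elim w₁ w₂, ?_, ?_⟩
    · intro u hu
      have hψ := hg ⟨u, hu⟩
      rw [hdot] at hψ
      simp only [ψ, f, LinearMap.coe_comp, Function.comp_apply,
        Submodule.coe_subtype, LinearMap.coe_mk, AddHom.coe_mk] at hψ
      rw [dot_sum_elim]
      rw [hψ]; ring
    · funext i; rfl
end

section
/- Let M be an invertible matrix on S ⊕ Q ⊕ P written in block form. Then the condition 'for all q ∈ Q ⊕ P: M^T q ∈ S ⊕ Q if and only if q ∈ Q' holds if and only if the block M_{QP} : P → Q is zero and the block M_{PP} : P → P is invertible (non-degenerate). -/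
open Matrix

/-- Characterisation of pointer-preserving measurements: for an invertible matrix
`M` on `S ⊕ Q ⊕ P`, the condition "for all `q ∈ Q ⊕ P`: `Mᵀ q ∈ S ⊕ Q` iff
`q ∈ Q`" holds iff the block `M_{QP}` vanishes and the block `M_{PP}` is
invertible. -/
theorem pointer_preserving_characterisation {K : Type*} [Field K]
    {ιS ιQ ιP : Type*} [Fintype ιS] [DecidableEq ιS] [Fintype ιQ] [DecidableEq ιQ]
    [Fintype ιP] [DecidableEq ιP]
    (M : Matrix (ιS ⊕ (ιQ ⊕ ιP)) (ιS ⊕ (ιQ ⊕ ιP)) K)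
    (hM : IsUnit M.det) :
    ((∀ q : (ιQ ⊕ ιP) → K,
        (∀ i : ιP, Mᵀ.mulVec (Sum.elim 0 q) (Sum.inr (Sum.inr i)) = 0) ↔
          (∀ i : ιP, q (Sum.inr i) = 0))
      ↔ ((Matrix.of fun (i : ιQ) (j : ιP) =>
            M (Sum.inr (Sum.inl i)) (Sum.inr (Sum.inr j))) = 0 ∧
          IsUnit (Matrix.of fun (i : ιP) (j : ιP) =>
            M (Sum.inr (Sum.inr i)) (Sum.inr (Sum.inr j))).det)) := by
  set A : Matrix ιQ ιP K :=
    Matrix.of fun (i : ιQ) (j : ιP) => M (Sum.inr (Sum.inl i)) (Sum.inr (Sum.inr j)) with hA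
  set B : Matrix ιP ιP K :=
    Matrix.of fun (i : ιP) (j : ιP) => M (Sum.inr (Sum.inr i)) (Sum.inr (Sum.inr j)) with hB
  have key : ∀ (q : (ιQ ⊕ ιP) → K) (i : ιP),
      Mᵀ.mulVec (Sum.elim 0 q) (Sum.inr (Sum.inr i)) =
        Aᵀ.mulVec (q ∘ Sum.inl) i + Bᵀ.mulVec (q ∘ Sum.inr) i := by
    intro q i
    simp [Matrix.mulVec, dotProduct, Fintype.sum_sum_type, hA, hB,
      Matrix.transpose_apply]
  constructor
  · intro h
    have hA0 : A = 0 := by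
      ext j i
      have := (h (Sum.elim (Pi.single j 1) 0)).mpr (by simp)
      have hi := this i
      rw [key] at hi
      simpa [Matrix.mulVec, dotProduct, Pi.single_apply, Function.comp,
        hA, Matrix.transpose_apply] using hi
    refine ⟨hA0, ?_⟩
    rw [← Matrix.det_transpose]
    rw [isUnit_iff_ne_zero]
    intro hdet
    obtain ⟨v, hv0, hv⟩ := (Matrix.exists_mulVec_eq_zero_iff).mpr hdet
    have := (h (Sum.elim 0 v)).mp ?_
    · exact hv0 (funext fun i => this i)
    · intro i
      rw [key]
      simp [hA0, hv]
  · rintro ⟨hA0, hBdet⟩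
    intro q
    have hBinj : Function.Injective Bᵀ.mulVec :=
      Matrix.mulVec_injective_iff_isUnit.mpr
        (by rwa [Matrix.isUnit_iff_isUnit_det, Matrix.det_transpose])
    constructor
    · intro h
      have : Bᵀ.mulVec (q ∘ Sum.inr) = 0 := by
        funext i
        have := h i
        rw [key] at this
        simpa [hA0] using this
      have hz : q ∘ Sum.inr = 0 := hBinj (by rw [this, Matrix.mulVec_zero])
      intro i
      exact congrFun hz i
    · intro h i
      rw [key]
      have : q ∘ Sum.inr = 0 := funext h
      simp [hA0, this]
end
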